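/- Let f : ℤ_p → ℤ_p be a measure-preserving 1-Lipschitz function with van der Put coefficients B_m, and for p^{n−1} ≤ m ≤ p^n − 1 (n ≥ 2) write B_m = p^{n−1} b_m with b_m = b_{m0} + b_{m1} p + ⋯, b_{m0} ≠ 0. Then for every fixed j with 0 ≤ j ≤ p^{n−1} − 1, the residues b_{i p^{n−1}+j, 0} for i = 1, …, p−1 are pairwise distinct (a permutation of 1, …, p−1). -/

import Mathlib

open MeasureTheory Finset

namespace VDP

noncomputable instance (p : ℕ) [Fact p.Prime] : MeasurableSpace ℤ_[p] := borel _
instance (p : ℕ) [Fact p.Prime] : BorelSpace ℤ_[p] := ⟨rfl⟩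

/-- The Haar probability measure on `ℤ_[p]`. -/
noncomputable def haarZp (p : ℕ) [Fact p.Prime] : Measure ℤ_[p] :=
  Measure.addHaarMeasure ⊤

/-- `f` is 1-Lipschitz. -/
def IsLip (p : ℕ) [Fact p.Prime] (f : ℤ_[p] → ℤ_[p]) : Prop :=
  ∀ x y : ℤ_[p], ‖f x - f y‖ ≤ ‖x - y‖

/-- The van der Put basis function `χ(m, x)` on `ℤ_[p]` (with `⌊log_p 0⌋ = 0`). -/
noncomputable def chi (p : ℕ) [Fact p.Prime] (m : ℕ) (x : ℤ_[p]) : ℤ_[p] :=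
  if ‖x - (m : ℤ_[p])‖ ≤ ((p : ℝ) ^ (Nat.log p m + 1))⁻¹ then 1 else 0

/-- `q(m) = m_s p^s`, the leading term of the `p`-adic expansion of `m`. -/
def q (p m : ℕ) : ℕ := m / p ^ Nat.log p m * p ^ Nat.log p m

/-- `f` has van der Put expansion with coefficients `B`. -/
def vdpExpansion (p : ℕ) [Fact p.Prime] (f : ℤ_[p] → ℤ_[p]) (B : ℕ → ℤ_[p]) : Prop :=
  ∀ x, f x = ∑' m, B m * chi p m x

/-- `f` is bijective modulo `p^n`. -/
def BijModPow (p : ℕ) [Fact p.Prime] (f : ℤ_[p] → ℤ_[p]) (n : ℕ) : Prop :=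
  Function.Bijective fun a : ZMod (p ^ n) => PadicInt.toZModPow n (f ((a.val : ℕ) : ℤ_[p]))

/-- `f` is transitive modulo `p^n`. -/
def TransModPow (p : ℕ) [Fact p.Prime] (f : ℤ_[p] → ℤ_[p]) (n : ℕ) : Prop :=
  ∀ x : ℤ_[p], ∀ a : ZMod (p ^ n), ∃ k : ℕ, PadicInt.toZModPow n (f^[k] x) = a

/-- The `i`-th digit of the canonical `p`-adic expansion of `x`. -/
noncomputable def digit (p : ℕ) [Fact p.Prime] (x : ℤ_[p]) (i : ℕ) : ℕ :=
  x.appr (i + 1) / p ^ i % p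

end VDP

/-! For `m ≥ p`, evaluating the van der Put series at the integers `m` and `m - q(m)` gives
sums that differ only in the term `χ(m, ·)`, so `B_m = f(m) - f(m - q(m))`. For
`m = i p^(n-1) + j` and `m' = i' p^(n-1) + j` both differences have the same subtrahend `f(j)`,
hence `b_{m,0} = b_{m',0}` forces `f(m) ≡ f(m') (mod p^n)`. A measure-preserving map has dense
range, so a 1-Lipschitz one induces a surjection, hence a bijection, of `ℤ/p^n`; therefore
`m = m'` and `i = i'`. -/

theorem MeasureTheory.MeasurePreserving.denseRange {α β : Type*} [MeasurableSpace α]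
    [MeasurableSpace β] [TopologicalSpace β] [OpensMeasurableSpace β] {μ : Measure α}
    {ν : Measure β} [ν.IsOpenPosMeasure] {f : α → β} (hf : MeasurePreserving f μ ν) :
    DenseRange f := by
  refine dense_iff_inter_open.2 fun U hU hne => ?_
  have hpre : μ (f ⁻¹' U) ≠ 0 := by
    rw [hf.measure_preimage hU.measurableSet.nullMeasurableSet]
    exact (hU.measure_pos ν hne).ne'
  obtain ⟨x, hx⟩ := nonempty_of_measure_ne_zero hpre
  exact ⟨f x, hx, x, rfl⟩

theorem Nat.mul_pow_add_lt_pow_succ {b i j k : ℕ} (hib : i < b) (hj : j < b ^ k) :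
    i * b ^ k + j < b ^ (k + 1) := by
  rw [pow_succ]
  nlinarith

theorem Nat.log_mul_pow_add {b i j k : ℕ} (hi : 0 < i) (hib : i < b) (hj : j < b ^ k) :
    Nat.log b (i * b ^ k + j) = k :=
  Nat.log_eq_of_pow_le_of_lt_pow (by nlinarith) (Nat.mul_pow_add_lt_pow_succ hib hj)

namespace VDP

variable {p : ℕ} [hp : Fact p.Prime]

instance : (haarZp p).IsAddHaarMeasure :=
  inferInstanceAs (Measure.addHaarMeasure ⊤).IsAddHaarMeasure

theorem toZModPow_eq_iff_dvd (n : ℕ) (x y : ℤ_[p]) :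
    PadicInt.toZModPow n x = PadicInt.toZModPow n y ↔ (p : ℤ_[p]) ^ n ∣ x - y := by
  rw [← sub_eq_zero, ← map_sub, ← RingHom.mem_ker, PadicInt.ker_toZModPow,
    Ideal.mem_span_singleton]

theorem toZModPow_eq_iff_norm_sub_le (n : ℕ) (x y : ℤ_[p]) :
    PadicInt.toZModPow n x = PadicInt.toZModPow n y ↔ ‖x - y‖ ≤ (p : ℝ) ^ (-n : ℤ) := by
  rw [toZModPow_eq_iff_dvd, ← Ideal.mem_span_singleton, PadicInt.norm_le_pow_iff_mem_span_pow]

theorem isOpen_setOf_toZModPow_eq (n : ℕ) (c : ZMod (p ^ n)) :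
    IsOpen {x : ℤ_[p] | PadicInt.toZModPow n x = c} := by
  have : NeZero (p ^ n) := ⟨pow_ne_zero n hp.out.ne_zero⟩
  have hball : {x : ℤ_[p] | PadicInt.toZModPow n x = c} =
      Metric.closedBall (c.val : ℤ_[p]) ((p : ℝ) ^ (-n : ℤ)) := by
    ext x
    rw [Set.mem_ofPred_eq, Metric.mem_closedBall, dist_eq_norm, ← toZModPow_eq_iff_norm_sub_le,
      map_natCast, ZMod.natCast_zmod_val]
  rw [hball]
  exact IsUltrametricDist.isOpen_closedBall _ (zpow_pos (by exact_mod_cast hp.out.pos) _).ne'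

theorem toZModPow_pow_mul_eq {x y : ℤ_[p]} (k : ℕ)
    (h : PadicInt.toZModPow 1 x = PadicInt.toZModPow 1 y) :
    PadicInt.toZModPow (k + 1) ((p : ℤ_[p]) ^ k * x) =
      PadicInt.toZModPow (k + 1) ((p : ℤ_[p]) ^ k * y) := by
  rw [toZModPow_eq_iff_dvd, pow_one] at h
  rw [toZModPow_eq_iff_dvd, ← mul_sub, pow_succ]
  exact mul_dvd_mul_left _ h

theorem toZModPow_one_eq_of_digit_zero_eq {x y : ℤ_[p]} (h : digit p x 0 = digit p y 0) :
    PadicInt.toZModPow 1 x = PadicInt.toZModPow 1 y := by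
  have hdigit : ∀ z : ℤ_[p], PadicInt.toZModPow 1 z = (digit p z 0 : ZMod (p ^ 1)) := by
    intro z
    change ((z.appr 1 : ℕ) : ZMod (p ^ 1)) = _
    rw [ZMod.natCast_eq_natCast_iff']
    simp [digit]
  rw [hdigit, hdigit, h]

theorem IsLip.toZModPow_eq {f : ℤ_[p] → ℤ_[p]} (hf : IsLip p f) {n : ℕ} {x y : ℤ_[p]}
    (h : PadicInt.toZModPow n x = PadicInt.toZModPow n y) :
    PadicInt.toZModPow n (f x) = PadicInt.toZModPow n (f y) := by
  rw [toZModPow_eq_iff_norm_sub_le] at h ⊢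
  exact (hf x y).trans h

theorem bijModPow_of_isLip_of_measurePreserving {f : ℤ_[p] → ℤ_[p]} (hf : IsLip p f)
    (hmp : MeasurePreserving f (haarZp p) (haarZp p)) (n : ℕ) : BijModPow p f n := by
  have : NeZero (p ^ n) := ⟨pow_ne_zero n hp.out.ne_zero⟩
  refine Finite.surjective_iff_bijective.1 fun c => ?_
  obtain ⟨x, hx⟩ := hmp.denseRange.exists_mem_open (isOpen_setOf_toZModPow_eq n c)
    ⟨c.val, by simp⟩
  refine ⟨PadicInt.toZModPow n x, (hf.toZModPow_eq ?_).trans hx⟩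
  rw [map_natCast, ZMod.natCast_zmod_val]

theorem BijModPow.eq_of_toZModPow_eq {f : ℤ_[p] → ℤ_[p]} {n : ℕ} (hf : BijModPow p f n)
    {m m' : ℕ} (hm : m < p ^ n) (hm' : m' < p ^ n)
    (h : PadicInt.toZModPow n (f m) = PadicInt.toZModPow n (f m')) : m = m' := by
  have : NeZero (p ^ n) := ⟨pow_ne_zero n hp.out.ne_zero⟩
  have hval := congrArg ZMod.val (hf.injective (a₁ := m) (a₂ := m') (by
    simpa only [ZMod.val_natCast_of_lt hm, ZMod.val_natCast_of_lt hm'] using h))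
  rwa [ZMod.val_natCast_of_lt hm, ZMod.val_natCast_of_lt hm'] at hval

theorem chi_natCast (k N : ℕ) :
    chi p k N = if N % p ^ (Nat.log p k + 1) = k then 1 else 0 := by
  have hk : k % p ^ (Nat.log p k + 1) = k :=
    Nat.mod_eq_of_lt (Nat.lt_pow_succ_log_self hp.out.one_lt k)
  refine if_congr ?_ rfl rfl
  rw [← zpow_natCast, ← zpow_neg, ← toZModPow_eq_iff_norm_sub_le, map_natCast, map_natCast,
    ZMod.natCast_eq_natCast_iff', hk]

theorem chi_natCast_self (m : ℕ) : chi p m m = 1 := by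
  rw [chi_natCast, if_pos (Nat.mod_eq_of_lt (Nat.lt_pow_succ_log_self hp.out.one_lt m))]

theorem chi_natCast_of_lt {k N : ℕ} (h : N < k) : chi p k N = 0 := by
  rw [chi_natCast, if_neg]
  exact ((Nat.mod_le _ _).trans_lt h).ne

theorem chi_natCast_mod_pow_log {m k : ℕ} (hm : p ≤ m) (hk : k ≠ m) :
    chi p k m = chi p k (m % p ^ Nat.log p m : ℕ) := by
  have hp1 := hp.out.one_lt
  have hL : 1 ≤ Nat.log p m := Nat.log_pos hp1 hm
  rw [chi_natCast, chi_natCast]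
  rcases le_or_gt (Nat.log p k + 1) (Nat.log p m) with hkm | hmk
  · rw [Nat.mod_mod_of_dvd _ (pow_dvd_pow p hkm)]
  · have hk0 : k ≠ 0 := by
      rintro rfl
      rw [Nat.log_zero_right] at hmk
      omega
    have hmod : m % p ^ (Nat.log p k + 1) = m :=
      Nat.mod_eq_of_lt ((Nat.lt_pow_succ_log_self hp1 m).trans_le
        (Nat.pow_le_pow_right hp.out.pos hmk))
    have hlt : m % p ^ Nat.log p m % p ^ (Nat.log p k + 1) < k :=
      calc _ ≤ m % p ^ Nat.log p m := Nat.mod_le _ _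
        _ < p ^ Nat.log p m := Nat.mod_lt _ (pow_pos hp.out.pos _)
        _ ≤ p ^ Nat.log p k := Nat.pow_le_pow_right hp.out.pos (by omega)
        _ ≤ k := Nat.pow_log_le_self p hk0
    rw [hmod, if_neg hk.symm, if_neg hlt.ne]

theorem vdpExpansion.apply_natCast_eq_sum {f : ℤ_[p] → ℤ_[p]} {B : ℕ → ℤ_[p]}
    (hB : vdpExpansion p f B) {N M : ℕ} (hN : N ≤ M) :
    f N = ∑ k ∈ range (M + 1), B k * chi p k N := by
  rw [hB, tsum_eq_sum]
  intro k hk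
  rw [chi_natCast_of_lt (by rw [mem_range] at hk; omega), mul_zero]

-- `m % p ^ Nat.log p m` is `m - q p m`.
theorem vdpExpansion.coeff_eq_sub {f : ℤ_[p] → ℤ_[p]} {B : ℕ → ℤ_[p]}
    (hB : vdpExpansion p f B) {m : ℕ} (hm : p ≤ m) :
    B m = f m - f (m % p ^ Nat.log p m : ℕ) := by
  have hr : m % p ^ Nat.log p m < m :=
    (Nat.mod_lt _ (pow_pos hp.out.pos _)).trans_le
      (Nat.pow_log_le_self p (hp.out.pos.trans_le hm).ne')
  rw [hB.apply_natCast_eq_sum le_rfl, hB.apply_natCast_eq_sum hr.le, ← sum_sub_distrib,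
    sum_eq_single m]
  · rw [chi_natCast_self, chi_natCast_of_lt hr, mul_one, mul_zero, sub_zero]
  · intro k _ hk
    rw [chi_natCast_mod_pow_log hm hk, sub_self]
  · simp

theorem vdpExpansion.coeff_mul_pow_add {f : ℤ_[p] → ℤ_[p]} {B : ℕ → ℤ_[p]}
    (hB : vdpExpansion p f B) {i j k : ℕ} (hk : 1 ≤ k) (hi : 0 < i) (hip : i < p)
    (hj : j < p ^ k) :
    B (i * p ^ k + j) = f ↑(i * p ^ k + j) - f j := by
  have hpm : p ≤ i * p ^ k + j :=
    calc p = p ^ 1 := (pow_one p).symm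
      _ ≤ p ^ k := Nat.pow_le_pow_right hp.out.pos hk
      _ ≤ i * p ^ k + j := by nlinarith
  rw [hB.coeff_eq_sub hpm, Nat.log_mul_pow_add hi hip hj, Nat.mul_add_mod_of_lt hj]

end VDP

open VDP MeasureTheory in
theorem stmt7 (p : ℕ) [Fact p.Prime] (f : ℤ_[p] → ℤ_[p]) (B : ℕ → ℤ_[p]) (b : ℕ → ℤ_[p])
    (hf : IsLip p f) (hB : vdpExpansion p f B)
    (hmp : MeasurePreserving f (haarZp p) (haarZp p))
    (n : ℕ) (hn : 2 ≤ n)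
    (hb : ∀ m : ℕ, p ^ (n - 1) ≤ m → m ≤ p ^ n - 1 →
      B m = (p : ℤ_[p]) ^ (n - 1) * b m ∧ digit p (b m) 0 ≠ 0) :
    ∀ j : ℕ, j ≤ p ^ (n - 1) - 1 → ∀ i i' : ℕ,
      1 ≤ i → i ≤ p - 1 → 1 ≤ i' → i' ≤ p - 1 → i ≠ i' →
      digit p (b (i * p ^ (n - 1) + j)) 0 ≠ digit p (b (i' * p ^ (n - 1) + j)) 0 := by
  intro j hj i i' hi hip hi' hi'p hii' hdigit
  obtain ⟨k, rfl⟩ : ∃ k, n = k + 1 := ⟨n - 1, by omega⟩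
  rw [Nat.add_sub_cancel] at hb hj hdigit
  have hpk := pow_pos (Fact.out : p.Prime).pos k
  have hlt : ∀ {l}, l < p → l * p ^ k + j < p ^ (k + 1) := fun hlp =>
    Nat.mul_pow_add_lt_pow_succ hlp (by omega)
  have hcoeff : ∀ {l}, 0 < l → l < p → B (l * p ^ k + j) =
      (p : ℤ_[p]) ^ k * b (l * p ^ k + j) := fun hl hlp =>
    (hb _ (by nlinarith) (by have := hlt hlp; omega)).1
  have hf_eq : PadicInt.toZModPow (k + 1) (f ↑(i * p ^ k + j)) =
      PadicInt.toZModPow (k + 1) (f ↑(i' * p ^ k + j)) := by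
    have hB_eq := toZModPow_pow_mul_eq k (toZModPow_one_eq_of_digit_zero_eq hdigit)
    rw [← hcoeff hi (by omega), ← hcoeff hi' (by omega),
      hB.coeff_mul_pow_add (by omega) hi (by omega) (by omega),
      hB.coeff_mul_pow_add (by omega) hi' (by omega) (by omega), map_sub, map_sub] at hB_eq
    exact sub_left_injective hB_eq
  have hm_eq := (bijModPow_of_isLip_of_measurePreserving hf hmp (k + 1)).eq_of_toZModPow_eq
    (hlt (by omega)) (hlt (by omega)) hf_eq
  exact hii' (Nat.eq_of_mul_eq_mul_right hpk (by omega))
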